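/- Let Γ be a k-regular simple undirected graph on n vertices with t triangles. If the Grover walk on Γ is periodic (i.e., the time evolution matrix U satisfies U^τ = I for some positive integer τ), then k³ divides 16t, i.e., 16t/k³ ∈ ℤ. -/

import Mathlib

/-!
Periodicity `U ^ τ = 1` makes `U` diagonalizable with `τ`-th roots of unity as eigenvalues, so
every elementary symmetric function of the eigenvalues is an algebraic integer. Newton's identity
`6 e₃ = p₁³ - 3 p₁ p₂ + 2 p₃` with `p_j = tr U ^ j` computes `e₃`: the diagonal of `U` vanishes, so
`p₁ = 0`, and in a `k`-regular graph the only nonzero terms of `tr U³` come from the six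
orientations of each triangle, each contributing `(2 / k)³`. Hence `e₃ = p₃ / 3 = 16 t / k³` is a
rational algebraic integer, i.e. an integer.
-/

open Finset Polynomial

/-- The time evolution matrix of the Grover walk on a simple graph, indexed by the
symmetric arcs: U_{a,b} = (2/deg t(b)) δ_{o(a),t(b)} - δ_{a,b⁻¹}. -/
noncomputable def groverU {n : ℕ} (G : SimpleGraph (Fin n)) [DecidableRel G.Adj] :
    Matrix {p : Fin n × Fin n // G.Adj p.1 p.2} {p : Fin n × Fin n // G.Adj p.1 p.2} ℂ :=
  fun a b => (2 / (G.degree b.1.2 : ℂ)) * (if a.1.1 = b.1.2 then 1 else 0) -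
    (if a.1 = (b.1.2, b.1.1) then 1 else 0)

namespace Multiset

variable {R : Type*} [CommRing R]

theorem esymm_cons_succ (a : R) (s : Multiset R) (k : ℕ) :
    (a ::ₘ s).esymm (k + 1) = s.esymm (k + 1) + a * s.esymm k := by
  simp only [esymm, powersetCard_cons, map_add, sum_add, map_map, Function.comp_def, prod_cons,
    sum_map_mul_left]

theorem esymm_one_eq_sum (s : Multiset R) : s.esymm 1 = s.sum := by
  induction s using Multiset.induction_on with
  | empty => simp [esymm, powersetCard_zero_right]
  | cons a s ih => rw [esymm_cons_succ, ih, esymm, powersetCard_zero_left]; simp [add_comm]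

theorem two_mul_esymm_two (s : Multiset R) :
    2 * s.esymm 2 = s.sum ^ 2 - (s.map (· ^ 2)).sum := by
  induction s using Multiset.induction_on with
  | empty => simp [esymm, powersetCard_zero_right]
  | cons a s ih =>
    rw [esymm_cons_succ, sum_cons, map_cons, sum_cons]
    linear_combination ih + 2 * a * esymm_one_eq_sum s

theorem six_mul_esymm_three (s : Multiset R) :
    6 * s.esymm 3 = s.sum ^ 3 - 3 * s.sum * (s.map (· ^ 2)).sum + 2 * (s.map (· ^ 3)).sum := by
  induction s using Multiset.induction_on with
  | empty => simp [esymm, powersetCard_zero_right]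
  | cons a s ih =>
    rw [esymm_cons_succ, sum_cons, map_cons, sum_cons, map_cons, sum_cons]
    linear_combination ih + 3 * a * two_mul_esymm_two s

theorem isIntegral_esymm {S : Type*} [CommRing S] [Algebra S R] {s : Multiset R}
    (hs : ∀ x ∈ s, IsIntegral S x) (k : ℕ) : IsIntegral S (s.esymm k) :=
  IsIntegral.multiset_sum fun _ hx ↦ by
    obtain ⟨u, hu, rfl⟩ := mem_map.mp hx
    exact IsIntegral.multiset_prod fun y hy ↦ hs y (mem_of_le (mem_powersetCard.mp hu).1 hy)

end Multiset

theorem Nat.dvd_of_isIntegral_div {K : Type*} [Field K] [CharZero K] {a b : ℕ} (hb : b ≠ 0)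
    (h : IsIntegral ℤ ((a : K) / b)) : b ∣ a := by
  have hq : IsIntegral ℤ ((a : ℚ) / b) := by
    rw [← isIntegral_algebraMap_iff (algebraMap ℚ K).injective]
    simpa using h
  obtain ⟨m, hm⟩ := IsIntegrallyClosed.isIntegral_iff.mp hq
  have : (b : ℤ) * m = a := by
    rw [eq_div_iff (by exact_mod_cast hb), algebraMap_int_eq, eq_intCast] at hm
    exact_mod_cast (mul_comm _ _).trans hm
  exact Int.natCast_dvd_natCast.mp ⟨m, this.symm⟩

theorem IsIntegral.of_pow_eq_one {R A : Type*} [CommRing R] [Ring A] [Algebra R A] {x : A} {τ : ℕ}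
    (hτ : 0 < τ) (hx : x ^ τ = 1) : IsIntegral R x :=
  .of_pow hτ (hx ▸ isIntegral_one)

namespace Module.End

variable {K V : Type*} [Field K] [AddCommGroup V] [Module K V]

theorem isSemisimple_of_pow_eq_one {f : End K V} {τ : ℕ} (hτ : (τ : K) ≠ 0) (hf : f ^ τ = 1) :
    f.IsSemisimple :=
  isSemisimple_of_squarefree_aeval_eq_zero
    (X_pow_sub_one_separable_iff.mpr hτ).squarefree (by simp [hf])

theorem HasEigenvalue.pow_eq_one {f : End K V} {μ : K} {τ : ℕ} (hμ : f.HasEigenvalue μ)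
    (hf : f ^ τ = 1) : μ ^ τ = 1 := by
  obtain ⟨v, hv⟩ := hμ.exists_hasEigenvector
  have : μ ^ τ • v = (1 : K) • v := by rw [← hv.pow_apply, hf, one_smul, one_apply]
  exact smul_left_injective K hv.2 this

theorem pow_apply_of_mem_eigenspace {f : End K V} {μ : K} {x : V} (hx : x ∈ f.eigenspace μ)
    (j : ℕ) : (f ^ j) x = μ ^ j • x := by
  induction j with
  | zero => simp
  | succ j ih =>
    rw [pow_succ', mul_apply, ih, map_smul, mem_eigenspace_iff.mp hx, smul_smul, pow_succ]

variable [FiniteDimensional K V]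

theorem trace_restrict_pow_eigenspace (f : End K V) (μ : K) (j : ℕ)
    (h : Set.MapsTo (f ^ j) (f.eigenspace μ) (f.eigenspace μ)) :
    LinearMap.trace K _ ((f ^ j).restrict h) = Module.finrank K (f.eigenspace μ) * μ ^ j := by
  have : (f ^ j).restrict h = μ ^ j • 1 := by
    ext ⟨x, hx⟩
    exact pow_apply_of_mem_eigenspace hx j
  rw [this, map_smul, LinearMap.trace_one, smul_eq_mul, mul_comm]

theorem IsSemisimple.exists_multiset_trace_pow_eq [IsAlgClosed K] {f : End K V}
    (hf : f.IsSemisimple) :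
    ∃ s : Multiset K, (∀ μ ∈ s, f.HasEigenvalue μ) ∧
      ∀ j : ℕ, LinearMap.trace K V (f ^ j) = (s.map (· ^ j)).sum := by
  classical
  have hint : DirectSum.IsInternal f.eigenspace :=
    (DirectSum.isInternal_submodule_iff_iSupIndep_and_iSup_eq_top _).mpr
      ⟨f.eigenspaces_iSupIndep, hf.iSup_eigenspace_eq_top⟩
  have hfin : {μ | f.eigenspace μ ≠ ⊥}.Finite :=
    WellFoundedGT.finite_ne_bot_of_iSupIndep f.eigenspaces_iSupIndep
  have hmaps (j : ℕ) (μ : K) : Set.MapsTo (f ^ j) (f.eigenspace μ) (f.eigenspace μ) :=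
    mapsTo_genEigenspace_of_comm (Commute.pow_right rfl j) μ 1
  refine ⟨hfin.toFinset.val.bind fun μ ↦ .replicate (Module.finrank K (f.eigenspace μ)) μ,
    fun μ hμ ↦ ?_, fun j ↦ ?_⟩
  · obtain ⟨ν, hν, hμν⟩ := Multiset.mem_bind.mp hμ
    rw [Multiset.eq_of_mem_replicate hμν]
    exact hfin.mem_toFinset.mp hν
  · rw [LinearMap.trace_eq_sum_trace_restrict' hint hfin (hmaps j), Multiset.map_bind,
      Multiset.sum_bind]
    refine Finset.sum_congr rfl fun μ _ ↦ ?_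
    rw [trace_restrict_pow_eigenspace, Multiset.map_replicate, Multiset.sum_replicate, nsmul_eq_mul]

end Module.End

theorem Matrix.exists_multiset_trace_pow_eq_of_pow_eq_one {K ι : Type*} [Field K] [IsAlgClosed K]
    [Fintype ι] [DecidableEq ι] {M : Matrix ι ι K} {τ : ℕ} (hτ : (τ : K) ≠ 0) (hM : M ^ τ = 1) :
    ∃ s : Multiset K, (∀ μ ∈ s, μ ^ τ = 1) ∧ ∀ j : ℕ, (M ^ j).trace = (s.map (· ^ j)).sum := by
  have hpow (j : ℕ) : M.toLin' ^ j = (M ^ j).toLin' := (map_pow Matrix.toLinAlgEquiv' M j).symm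
  have hf : M.toLin' ^ τ = 1 := by rw [hpow, hM, Matrix.toLin'_one]; rfl
  obtain ⟨s, hs, htr⟩ := (Module.End.isSemisimple_of_pow_eq_one hτ hf).exists_multiset_trace_pow_eq
  exact ⟨s, fun μ hμ ↦ (hs μ hμ).pow_eq_one hf, fun j ↦ by
    rw [← htr, hpow, Matrix.trace_toLin'_eq]⟩

theorem Finset.card_filter_ne_ne {α : Type*} [DecidableEq α] {s : Finset α} {a b : α}
    (ha : a ∈ s) (hb : b ∈ s) (hab : a ≠ b) : #{x ∈ s | x ≠ a ∧ x ≠ b} = #s - 2 := by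
  have : {x ∈ s | x ≠ a ∧ x ≠ b} = s \ {a, b} := by ext; simp [and_comm]
  rw [this, card_sdiff_of_subset (by simp [insert_subset_iff, ha, hb]), card_pair hab]

theorem Finset.card_distinctTriples {α : Type*} [DecidableEq α] (s : Finset α) :
    #{p ∈ s ×ˢ s.offDiag | p.1 ≠ p.2.1 ∧ p.1 ≠ p.2.2} = #s * (#s - 1) * (#s - 2) := by
  rw [card_filter, sum_product_right]
  simp_rw [← card_filter]
  rw [sum_congr rfl fun q hq ↦ card_filter_ne_ne (mem_offDiag.mp hq).1 (mem_offDiag.mp hq).2.1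
    (mem_offDiag.mp hq).2.2, sum_const, offDiag_card, smul_eq_mul, Nat.mul_sub_one]

namespace SimpleGraph

variable {V : Type*} [Fintype V] (G : SimpleGraph V) [DecidableRel G.Adj]

theorem cliqueFree_of_forall_degree_eq_zero (h : ∀ v, G.degree v = 0) {m : ℕ} (hm : 2 ≤ m) :
    G.CliqueFree m := by
  have : G = ⊥ := by
    ext v w
    refine iff_of_false (fun hvw ↦ ?_) id
    exact (h v ▸ (G.degree_pos_iff_exists_adj v).mpr ⟨w, hvw⟩).false
  exact this ▸ cliqueFree_bot hm

variable [DecidableEq V]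

theorem card_orderedTriangles :
    #{p : V × V × V | G.Adj p.1 p.2.1 ∧ G.Adj p.2.1 p.2.2 ∧ G.Adj p.2.2 p.1} =
      6 * #(G.cliqueFinset 3) := by
  set T := ({p : V × V × V | G.Adj p.1 p.2.1 ∧ G.Adj p.2.1 p.2.2 ∧ G.Adj p.2.2 p.1} : Finset _)
  have hmaps : ∀ p ∈ T, ({p.1, p.2.1, p.2.2} : Finset V) ∈ G.cliqueFinset 3 := by
    rintro ⟨x, y, z⟩ hp
    obtain ⟨hxy, hyz, hzx⟩ := (mem_filter.mp hp).2
    exact mem_cliqueFinset_iff.mpr (is3Clique_triple_iff.mpr ⟨hxy, hzx.symm, hyz⟩)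
  rw [card_eq_sum_card_fiberwise hmaps, mul_comm, ← smul_eq_mul, ← sum_const]
  refine sum_congr rfl fun s hs ↦ ?_
  have hs := mem_cliqueFinset_iff.mp hs
  suffices {p ∈ T | {p.1, p.2.1, p.2.2} = s} = {p ∈ s ×ˢ s.offDiag | p.1 ≠ p.2.1 ∧ p.1 ≠ p.2.2} by
    rw [this, card_distinctTriples, hs.card_eq]
  ext ⟨x, y, z⟩
  simp only [T, mem_filter, mem_univ, true_and, mem_product, mem_offDiag]
  constructor
  · rintro ⟨⟨hxy, hyz, hzx⟩, rfl⟩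
    simp [hxy.ne, hyz.ne, hzx.ne']
  · rintro ⟨⟨hx, hy, hz, hyz⟩, hxy, hxz⟩
    refine ⟨⟨hs.1 hx hy hxy, hs.1 hy hz hyz, hs.1 hz hx (Ne.symm hxz)⟩, ?_⟩
    refine eq_of_subset_of_card_le (by simp [insert_subset_iff, hx, hy, hz]) ?_
    rw [hs.card_eq, card_eq_three.mpr ⟨x, y, z, hxy, hxz, hyz, rfl⟩]

abbrev Arc : Type _ := {p : V × V // G.Adj p.1 p.2}

theorem card_closedArcTriangles :
    #{x : G.Arc × G.Arc × G.Arc |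
      x.1.1.1 = x.2.1.1.2 ∧ x.2.1.1.1 = x.2.2.1.2 ∧ x.2.2.1.1 = x.1.1.2} =
      6 * #(G.cliqueFinset 3) := by
  rw [← card_orderedTriangles]
  refine card_bij' (fun x _ ↦ (x.1.1.1, x.2.2.1.1, x.2.1.1.1))
    (fun p hp ↦ (⟨(p.1, p.2.1), (mem_filter.mp hp).2.1⟩, ⟨(p.2.2, p.1), (mem_filter.mp hp).2.2.2⟩,
      ⟨(p.2.1, p.2.2), (mem_filter.mp hp).2.2.1⟩)) ?_ ?_ ?_ ?_
  · rintro ⟨⟨⟨x, y⟩, hxy⟩, ⟨⟨z, x'⟩, hzx⟩, ⟨⟨y', z'⟩, hyz⟩⟩ h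
    simp only [mem_filter, mem_univ, true_and] at h ⊢
    obtain ⟨rfl, rfl, rfl⟩ := h
    exact ⟨hxy, hyz, hzx⟩
  · simp
  · rintro ⟨⟨⟨x, y⟩, hxy⟩, ⟨⟨z, x'⟩, hzx⟩, ⟨⟨y', z'⟩, hyz⟩⟩ h
    simp only [mem_filter, mem_univ, true_and] at h
    obtain ⟨rfl, rfl, rfl⟩ := h
    rfl
  · simp

end SimpleGraph

section groverU

variable {n : ℕ} {G : SimpleGraph (Fin n)} [DecidableRel G.Adj]

theorem groverU_apply_of_ne {a b : G.Arc} (h : a.1.1 ≠ b.1.2) :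
    groverU G a b = 0 := by
  have : a.1 ≠ (b.1.2, b.1.1) := fun h' ↦ h (congrArg Prod.fst h')
  simp [groverU, h, this]

theorem trace_groverU : (groverU G).trace = 0 :=
  sum_eq_zero fun a _ ↦ groverU_apply_of_ne a.2.ne

theorem groverU_apply_of_ne_reverse {k : ℕ} (hreg : ∀ v, G.degree v = k)
    {a b : G.Arc} (h : a.1.1 = b.1.2) (hrev : a.1.2 ≠ b.1.1) :
    groverU G a b = 2 / k := by
  have : a.1 ≠ (b.1.2, b.1.1) := fun h' ↦ hrev (congrArg Prod.snd h')
  simp [groverU, h, this, hreg]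

theorem groverU_mul_mul_apply {k : ℕ} (hreg : ∀ v, G.degree v = k)
    (a b c : G.Arc) :
    groverU G a b * groverU G b c * groverU G c a =
      if a.1.1 = b.1.2 ∧ b.1.1 = c.1.2 ∧ c.1.1 = a.1.2 then (2 / k : ℂ) ^ 3 else 0 := by
  split_ifs with h
  · obtain ⟨hab, hbc, hca⟩ := h
    rw [groverU_apply_of_ne_reverse hreg hab (by rw [← hca, hbc]; exact c.2.ne),
      groverU_apply_of_ne_reverse hreg hbc (by rw [← hab, hca]; exact a.2.ne),
      groverU_apply_of_ne_reverse hreg hca (by rw [← hbc, hab]; exact b.2.ne)]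
    ring
  · simp only [not_and_or] at h
    rcases h with h | h | h <;> simp [groverU_apply_of_ne h]

theorem trace_groverU_pow_three {k : ℕ} (hreg : ∀ v, G.degree v = k) :
    (groverU G ^ 3).trace = (2 / k : ℂ) ^ 3 * (6 * #(G.cliqueFinset 3)) := by
  have hexpand : (groverU G ^ 3).trace =
      ∑ x : G.Arc × G.Arc × G.Arc,
        groverU G x.1 x.2.1 * groverU G x.2.1 x.2.2 * groverU G x.2.2 x.1 := by
    simp only [pow_three, Matrix.trace, Matrix.diag, Matrix.mul_apply, Fintype.sum_prod_type,
      mul_sum, mul_assoc]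
  rw [hexpand]
  simp_rw [groverU_mul_mul_apply hreg]
  rw [← sum_filter, sum_const, nsmul_eq_mul, G.card_closedArcTriangles]
  push_cast
  ring

end groverU

/-- if the Grover walk on a k-regular simple graph on n vertices with
t triangles is periodic, then k³ divides 16t. -/
theorem regular_periodic_triangle_dvd (n k t : ℕ)
    (G : SimpleGraph (Fin n)) [DecidableRel G.Adj]
    (hreg : ∀ v : Fin n, G.degree v = k)
    (ht : (G.cliqueFinset 3).card = t)
    (hper : ∃ τ : ℕ, 0 < τ ∧ groverU G ^ τ = 1) :
    k ^ 3 ∣ 16 * t := by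
  subst ht
  -- for `k = 0` the quotient `16 t / k³` below is the junk value `0`
  obtain rfl | hk := eq_or_ne k 0
  · simpa using G.cliqueFree_of_forall_degree_eq_zero hreg (by norm_num : 2 ≤ 3)
  obtain ⟨τ, hτ, hU⟩ := hper
  obtain ⟨s, hroots, htrace⟩ :=
    Matrix.exists_multiset_trace_pow_eq_of_pow_eq_one (by exact_mod_cast hτ.ne') hU
  have hp1 : s.sum = 0 := by simpa [trace_groverU] using (htrace 1).symm
  have hp3 : (s.map (· ^ 3)).sum = (2 / k : ℂ) ^ 3 * (6 * #(G.cliqueFinset 3)) := by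
    rw [← htrace, trace_groverU_pow_three hreg]
  have he3 : s.esymm 3 = ((16 * #(G.cliqueFinset 3) : ℕ) : ℂ) / ((k ^ 3 : ℕ) : ℂ) := by
    have hk' : (k : ℂ) ≠ 0 := by exact_mod_cast hk
    have h6 := s.six_mul_esymm_three
    rw [hp1, hp3] at h6
    field_simp at h6
    rw [eq_div_iff (by simpa using hk')]
    push_cast
    linear_combination h6 / 6
  refine Nat.dvd_of_isIntegral_div (K := ℂ) (pow_ne_zero 3 hk) ?_
  rw [← he3]
  exact Multiset.isIntegral_esymm (fun μ hμ ↦ .of_pow_eq_one hτ (hroots μ hμ)) 3
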